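/- Let X be an m×p real matrix, P = X(X*X)⁺X* the orthogonal projection onto the range of X, and Y an m×n matrix. For each r, let (PY)ᵣ be a best rank-≤r approximation of PY in Frobenius norm, and let Âᵣ minimize ‖Y − XA‖ over p×n matrices A of rank at most r. Then XÂᵣ = (PY)ᵣ, i.e., ‖Y − (PY)ᵣ‖ = min over rank-≤r matrices B of the form XA of ‖Y − B‖, and (PY)ᵣ lies in the range of X. -/

import Mathlib

open MeasureTheory ProbabilityTheory Matrix Finset Real

/-- The `k`-th largest singular value (0-indexed) of a real matrix. -/
noncomputable def sv {m n : ℕ} (M : Matrix (Fin m) (Fin n) ℝ) : ℕ → ℝ :=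
  fun k => Real.sqrt (((List.ofFn
    (show (Mᵀ * M).IsHermitian by simpa using Matrix.isHermitian_conjTranspose_mul_self M).eigenvalues).insertionSort (· ≥ ·)).getD k 0)

/-- The Ky-Fan `(2,r)` norm: square root of the sum of the `r` largest squared singular values. -/
noncomputable def kyFan {m n : ℕ} (r : ℕ) (M : Matrix (Fin m) (Fin n) ℝ) : ℝ :=
  Real.sqrt (∑ k ∈ Finset.range r, (sv M k) ^ 2)

/-- The Frobenius (Hilbert-Schmidt) norm. -/
noncomputable def frob {m n : ℕ} (M : Matrix (Fin m) (Fin n) ℝ) : ℝ :=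
  Real.sqrt (∑ i, ∑ j, (M i j) ^ 2)

/-!
`P = X W Xᵀ` is symmetric, idempotent and fixes `X`: cancel `XᵀX` on either side of
`XᵀX W XᵀX = XᵀX`, using that `XᵀX M = 0` forces `X M = 0`. Hence for every `C` with `P C = C`
Pythagoras gives `‖Y - C‖² = ‖Y - PY‖² + ‖PY - C‖²`. Since `‖PY - B‖² = ‖PY - PB‖² + ‖PB - B‖²`
and `PB` has rank at most `r`, optimality of `B` forces `PB = B`; then the decomposition above,
applied to `B` and to `XA`, turns the optimality of `B` for `PY` into optimality for `Y`.
-/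

lemma frob_nonneg {m n : ℕ} (M : Matrix (Fin m) (Fin n) ℝ) : 0 ≤ frob M :=
  Real.sqrt_nonneg _

lemma frob_sq_eq_trace {m n : ℕ} (M : Matrix (Fin m) (Fin n) ℝ) :
    frob M ^ 2 = (Mᵀ * M).trace := by
  rw [frob, Real.sq_sqrt (by positivity), Matrix.trace, Finset.sum_comm]
  simp [Matrix.mul_apply, sq]

lemma frob_eq_zero_iff {m n : ℕ} {M : Matrix (Fin m) (Fin n) ℝ} : frob M = 0 ↔ M = 0 := by
  rw [← sq_eq_zero_iff (M₀ := ℝ), frob_sq_eq_trace, ← conjTranspose_eq_transpose_of_trivial,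
    trace_conjTranspose_mul_self_eq_zero_iff]

lemma frob_sub_comm {m n : ℕ} (M N : Matrix (Fin m) (Fin n) ℝ) :
    frob (M - N) = frob (N - M) := by
  simp only [frob, Matrix.sub_apply, sub_sq_comm]

lemma frob_add_sq_of_transpose_mul_eq_zero {m n : ℕ} {D E : Matrix (Fin m) (Fin n) ℝ}
    (h : Dᵀ * E = 0) : frob (D + E) ^ 2 = frob D ^ 2 + frob E ^ 2 := by
  have h' : Eᵀ * D = 0 := by
    simpa only [transpose_mul, transpose_transpose, transpose_zero] using congrArg transpose h
  simp only [frob_sq_eq_trace, transpose_add, Matrix.add_mul, Matrix.mul_add, h, h', trace_add,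
    add_zero, zero_add]

section Cancellation

variable {ι κ μ : Type*} [Fintype ι] [Fintype κ] {X : Matrix ι κ ℝ}

lemma mul_eq_mul_of_transpose_mul_self_mul_eq {M N : Matrix κ μ ℝ}
    (h : Xᵀ * X * M = Xᵀ * X * N) : X * M = X * N := by
  rw [← sub_eq_zero, ← Matrix.mul_sub] at h ⊢
  rwa [← conjTranspose_eq_transpose_of_trivial, conjTranspose_mul_self_mul_eq_zero] at h

lemma mul_transpose_eq_of_mul_transpose_mul_self_eq {M N : Matrix μ κ ℝ}
    (h : M * (Xᵀ * X) = N * (Xᵀ * X)) : M * Xᵀ = N * Xᵀ := by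
  rw [← sub_eq_zero, ← Matrix.sub_mul] at h ⊢
  rwa [← conjTranspose_eq_transpose_of_trivial, mul_conjTranspose_mul_self_eq_zero] at h

end Cancellation

section GeneralizedInverse

variable {ι κ : Type*} [Fintype ι] [Fintype κ]

def hatMatrix (X : Matrix ι κ ℝ) (W : Matrix κ κ ℝ) : Matrix ι ι ℝ := X * W * Xᵀ

variable {X : Matrix ι κ ℝ} {W : Matrix κ κ ℝ}

lemma transpose_mul_self_mul_transpose_ginv (hW : Xᵀ * X * W * (Xᵀ * X) = Xᵀ * X) :
    Xᵀ * X * Wᵀ * (Xᵀ * X) = Xᵀ * X := by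
  simpa only [transpose_mul, transpose_transpose, Matrix.mul_assoc] using congrArg transpose hW

variable [DecidableEq κ]

lemma mul_ginv_mul_transpose_mul_self (hW : Xᵀ * X * W * (Xᵀ * X) = Xᵀ * X) :
    X * W * (Xᵀ * X) = X := by
  simpa only [Matrix.mul_assoc, Matrix.mul_one] using
    mul_eq_mul_of_transpose_mul_self_mul_eq (M := W * (Xᵀ * X)) (N := 1)
      (by rwa [Matrix.mul_one, ← Matrix.mul_assoc])

lemma hatMatrix_transpose (hW : Xᵀ * X * W * (Xᵀ * X) = Xᵀ * X) :
    (hatMatrix X W)ᵀ = hatMatrix X W := by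
  rw [hatMatrix, transpose_mul, transpose_mul, transpose_transpose, ← Matrix.mul_assoc]
  exact mul_transpose_eq_of_mul_transpose_mul_self_eq <| by
    rw [mul_ginv_mul_transpose_mul_self hW,
      mul_ginv_mul_transpose_mul_self (transpose_mul_self_mul_transpose_ginv hW)]

lemma hatMatrix_mul_self (hW : Xᵀ * X * W * (Xᵀ * X) = Xᵀ * X) :
    hatMatrix X W * X = X := by
  rw [hatMatrix, Matrix.mul_assoc _ Xᵀ, mul_ginv_mul_transpose_mul_self hW]

lemma hatMatrix_mul_hatMatrix (hW : Xᵀ * X * W * (Xᵀ * X) = Xᵀ * X) :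
    hatMatrix X W * hatMatrix X W = hatMatrix X W := by
  nth_rw 2 [hatMatrix]
  simp only [← Matrix.mul_assoc, hatMatrix_mul_self hW]
  rfl

end GeneralizedInverse

section OrthogonalProjection

variable {m n : ℕ} {P : Matrix (Fin m) (Fin m) ℝ}

lemma frob_sub_sq_eq_of_mul_eq (hPt : Pᵀ = P) (hPP : P * P = P) (Y : Matrix (Fin m) (Fin n) ℝ)
    {C : Matrix (Fin m) (Fin n) ℝ} (hC : P * C = C) :
    frob (Y - C) ^ 2 = frob (Y - P * Y) ^ 2 + frob (P * Y - C) ^ 2 := by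
  have horth : (Y - P * Y)ᵀ * (P * (Y - C)) = 0 := by
    rw [transpose_sub, Matrix.sub_mul, transpose_mul, hPt, Matrix.mul_assoc,
      ← Matrix.mul_assoc P P, hPP, sub_self]
  rw [Matrix.mul_sub, hC] at horth
  rw [← frob_add_sq_of_transpose_mul_eq_zero horth, sub_add_sub_cancel]

lemma mul_eq_self_of_best_rank_approx (hPt : Pᵀ = P) (hPP : P * P = P)
    {Y B : Matrix (Fin m) (Fin n) ℝ} {r : ℕ} (hBrank : B.rank ≤ r)
    (hBbest : ∀ C : Matrix (Fin m) (Fin n) ℝ, C.rank ≤ r →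
      frob (P * Y - B) ≤ frob (P * Y - C)) :
    P * B = B := by
  have hPY : P * (P * Y) = P * Y := by rw [← Matrix.mul_assoc, hPP]
  have hpyth := frob_sub_sq_eq_of_mul_eq hPt hPP B hPY
  rw [frob_sub_comm B, frob_sub_comm (P * B)] at hpyth
  have hle := hBbest (P * B) ((rank_mul_le_right P B).trans hBrank)
  have hzero : frob (B - P * B) = 0 := by
    nlinarith [frob_nonneg (P * Y - B), frob_nonneg (P * Y - P * B), frob_nonneg (B - P * B)]
  exact (sub_eq_zero.mp (frob_eq_zero_iff.mp hzero)).symm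

end OrthogonalProjection

theorem stmt6_general {m p n : ℕ} {r : ℕ} (X : Matrix (Fin m) (Fin p) ℝ)
    (Wp : Matrix (Fin p) (Fin p) ℝ)
    (h1 : (Xᵀ * X) * Wp * (Xᵀ * X) = Xᵀ * X)
    (Y B : Matrix (Fin m) (Fin n) ℝ) (hBrank : B.rank ≤ r)
    (hBbest : ∀ C : Matrix (Fin m) (Fin n) ℝ, C.rank ≤ r →
      frob ((X * Wp * Xᵀ) * Y - B) ≤ frob ((X * Wp * Xᵀ) * Y - C)) :
    (∃ A : Matrix (Fin p) (Fin n) ℝ, B = X * A) ∧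
      ∀ A : Matrix (Fin p) (Fin n) ℝ, A.rank ≤ r → frob (Y - B) ≤ frob (Y - X * A) := by
  have hPt := hatMatrix_transpose h1
  have hPP := hatMatrix_mul_hatMatrix h1
  have hPB : hatMatrix X Wp * B = B := mul_eq_self_of_best_rank_approx hPt hPP hBrank hBbest
  refine ⟨⟨Wp * (Xᵀ * B), by simpa only [hatMatrix, Matrix.mul_assoc] using hPB.symm⟩,
    fun A hA => ?_⟩
  have hPXA : hatMatrix X Wp * (X * A) = X * A := by
    rw [← Matrix.mul_assoc, hatMatrix_mul_self h1]
  have hle := hBbest (X * A) ((rank_mul_le_right X A).trans hA)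
  rw [← pow_le_pow_iff_left₀ (frob_nonneg _) (frob_nonneg _) two_ne_zero,
    frob_sub_sq_eq_of_mul_eq hPt hPP Y hPB, frob_sub_sq_eq_of_mul_eq hPt hPP Y hPXA]
  gcongr
  exacts [frob_nonneg _, hle]

theorem stmt6 {m p n : ℕ} {r : ℕ} (X : Matrix (Fin m) (Fin p) ℝ)
    (Wp : Matrix (Fin p) (Fin p) ℝ)
    (h1 : (Xᵀ * X) * Wp * (Xᵀ * X) = Xᵀ * X)
    (h2 : Wp * (Xᵀ * X) * Wp = Wp)
    (h3 : ((Xᵀ * X) * Wp)ᵀ = (Xᵀ * X) * Wp)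
    (h4 : (Wp * (Xᵀ * X))ᵀ = Wp * (Xᵀ * X))
    (Y B : Matrix (Fin m) (Fin n) ℝ) (hBrank : B.rank ≤ r)
    (hBbest : ∀ C : Matrix (Fin m) (Fin n) ℝ, C.rank ≤ r →
      frob ((X * Wp * Xᵀ) * Y - B) ≤ frob ((X * Wp * Xᵀ) * Y - C)) :
    (∃ A : Matrix (Fin p) (Fin n) ℝ, B = X * A) ∧
      ∀ A : Matrix (Fin p) (Fin n) ℝ, A.rank ≤ r → frob (Y - B) ≤ frob (Y - X * A) :=
  stmt6_general X Wp h1 Y B hBrank hBbest
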